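/- Let A ∈ ℂ^{m×N} satisfy the ℓ_2-robust null space property of order n with constants ρ ∈ (0,1) and τ > 0, and let λ ≥ ((3+ρ)/(1+ρ))·τ·√n. Then there is a constant C > 0 depending only on ρ and τ such that for every y ∈ ℂ^m, every minimizer r of the map z ↦ ‖z‖_{ℓ_1} + λ‖y − Az‖_{ℓ_2} over ℂ^N satisfies, for p ∈ {1,2} and all v ∈ ℂ^N, ‖v − r‖_{ℓ_p} ≤ C ( n^{1/p−1} σ_n(v)_{ℓ_1} + (λ n^{1/p−1} + n^{1−p/2}) ‖y − Av‖_{ℓ_2} ). -/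

import Mathlib

open scoped BigOperators
open scoped Classical

/-- The `ℓ_p` norm of a finite complex vector. -/
noncomputable def lpNorm {ι : Type*} [Fintype ι] (p : ℝ) (v : ι → ℂ) : ℝ :=
  (∑ i, ‖v i‖ ^ p) ^ (1 / p)

/-- Number of nonzero entries of a vector. -/
noncomputable def sparsity {ι : Type*} [Fintype ι] (v : ι → ℂ) : ℕ :=
  (Finset.univ.filter fun i => v i ≠ 0).card

/-- Best `n`-term approximation error of `v` in `ℓ_p`. -/
noncomputable def bestApprox {ι : Type*} [Fintype ι] (n : ℕ) (p : ℝ) (v : ι → ℂ) : ℝ :=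
  sInf {t : ℝ | ∃ z : ι → ℂ, sparsity z ≤ n ∧ t = lpNorm p (v - z)}

/-- `A` satisfies the restricted isometry property of order `n` with constant `δ`. -/
def HasRIP {m : ℕ} {ι : Type*} [Fintype ι] (A : Matrix (Fin m) ι ℂ) (n : ℕ) (δ : ℝ) : Prop :=
  ∀ v : ι → ℂ, sparsity v ≤ n →
    (1 - δ) * lpNorm 2 v ^ 2 ≤ lpNorm 2 (A.mulVec v) ^ 2 ∧
      lpNorm 2 (A.mulVec v) ^ 2 ≤ (1 + δ) * lpNorm 2 v ^ 2

/-- `A` satisfies the `ℓ₂`-robust null space property of order `n`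
with constants `ρ` and `τ`. -/
def HasNSP {m : ℕ} {ι : Type*} [Fintype ι] (A : Matrix (Fin m) ι ℂ) (n : ℕ) (ρ τ : ℝ) : Prop :=
  ∀ (v : ι → ℂ) (S : Finset ι), S.card ≤ n →
    lpNorm 2 (fun i => if i ∈ S then v i else 0) ≤
      ρ * (n : ℝ) ^ (-(1 : ℝ) / 2) * lpNorm 1 (fun i => if i ∈ S then 0 else v i) +
        τ * lpNorm 2 (A.mulVec v)

/-!
Write `w = v - r`, `E = ‖y - A v‖₂`, `F = ‖y - A r‖₂`, and let `S` carry a best `n`-term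
approximation of `v`. Testing the minimality of `r` against `v` gives the cone constraint
`‖w_{Sᶜ}‖₁ ≤ ‖w_S‖₁ + 2 σ_n(v)₁ + λ (E - F)`, while the null space property, turned into an
`ℓ₁` statement by Cauchy–Schwarz, gives `‖w_S‖₁ ≤ ρ ‖w_{Sᶜ}‖₁ + τ √n (E + F)`. Because
`(1 + ρ) λ ≥ 2 τ √n`, the `F` terms cancel and `(1 - ρ) ‖w‖₁ ≤ 2 (1 + ρ) (σ_n(v)₁ + λ E)`.
For `ℓ₂`, Stechkin's estimate provides `n` indices off which `‖w‖₂ ≤ ‖w‖₁ / √n`, the null space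
property controls `w` on them, and minimality once more gives `λ F ≤ ‖w‖₁ + λ E`.
-/

open Finset Matrix

section Norms

variable {ι : Type*} [Fintype ι]

lemma lpNorm_one_eq_sum (v : ι → ℂ) : lpNorm 1 v = ∑ i, ‖v i‖ := by
  simp [lpNorm]

lemma lpNorm_two_eq_sqrt (v : ι → ℂ) : lpNorm 2 v = √(∑ i, ‖v i‖ ^ 2) := by
  rw [lpNorm, Real.sqrt_eq_rpow]
  norm_num [Real.rpow_two]

lemma lpNorm_two_eq_norm_toLp (v : ι → ℂ) : lpNorm 2 v = ‖WithLp.toLp 2 v‖ := by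
  rw [lpNorm_two_eq_sqrt, EuclideanSpace.norm_eq]

lemma lpNorm_two_nonneg (v : ι → ℂ) : 0 ≤ lpNorm 2 v := by
  rw [lpNorm_two_eq_sqrt]
  positivity

lemma lpNorm_two_sub_le (u w : ι → ℂ) : lpNorm 2 (u - w) ≤ lpNorm 2 u + lpNorm 2 w := by
  simpa only [lpNorm_two_eq_norm_toLp, WithLp.toLp_sub] using norm_sub_le _ _

lemma lpNorm_two_mulVec_sub_le {κ : Type*} [Fintype κ] (A : Matrix κ ι ℂ) (y : κ → ℂ)
    (v r : ι → ℂ) :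
    lpNorm 2 (A *ᵥ (v - r)) ≤ lpNorm 2 (y - A *ᵥ v) + lpNorm 2 (y - A *ᵥ r) := by
  simpa [mulVec_sub, add_comm] using lpNorm_two_sub_le (y - A *ᵥ r) (y - A *ᵥ v)

lemma lpNorm_two_ite_mem (S : Finset ι) (v : ι → ℂ) :
    lpNorm 2 (fun i => if i ∈ S then v i else 0) = √(∑ i ∈ S, ‖v i‖ ^ 2) := by
  simp [lpNorm_two_eq_sqrt, apply_ite, sum_ite_mem]

lemma lpNorm_one_ite_mem_zero (S : Finset ι) (v : ι → ℂ) :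
    lpNorm 1 (fun i => if i ∈ S then 0 else v i) = ∑ i ∈ Sᶜ, ‖v i‖ := by
  simp only [lpNorm_one_eq_sum, apply_ite norm, norm_zero]
  rw [← sum_add_sum_compl S, sum_ite_of_true (fun _ h => h),
    sum_ite_of_false (fun _ h => mem_compl.1 h)]
  simp

lemma lpNorm_two_le_add_compl (S : Finset ι) (v : ι → ℂ) :
    lpNorm 2 v ≤ √(∑ i ∈ S, ‖v i‖ ^ 2) + √(∑ i ∈ Sᶜ, ‖v i‖ ^ 2) := by
  have sqrt_add_le {a b : ℝ} (ha : 0 ≤ a) (hb : 0 ≤ b) : √(a + b) ≤ √a + √b := by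
    refine Real.sqrt_le_iff.2 ⟨by positivity, ?_⟩
    rw [add_sq, Real.sq_sqrt ha, Real.sq_sqrt hb]
    nlinarith [Real.sqrt_nonneg a, Real.sqrt_nonneg b]
  rw [lpNorm_two_eq_sqrt, ← sum_add_sum_compl S]
  exact sqrt_add_le (by positivity) (by positivity)

lemma sum_compl_norm_sub_add_sum_norm_le {E : Type*} [SeminormedAddCommGroup E]
    (S : Finset ι) (v r : ι → E) :
    ∑ i ∈ Sᶜ, ‖(v - r) i‖ + ∑ i, ‖v i‖ ≤
      ∑ i ∈ S, ‖(v - r) i‖ + 2 * ∑ i ∈ Sᶜ, ‖v i‖ + ∑ i, ‖r i‖ := by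
  have hS : ∑ i ∈ S, ‖v i‖ ≤ ∑ i ∈ S, (‖(v - r) i‖ + ‖r i‖) :=
    sum_le_sum fun i _ => by simpa [add_comm] using norm_le_norm_add_norm_sub' (v i) (r i)
  have hSc : ∑ i ∈ Sᶜ, ‖(v - r) i‖ ≤ ∑ i ∈ Sᶜ, (‖v i‖ + ‖r i‖) :=
    sum_le_sum fun i _ => norm_sub_le (v i) (r i)
  rw [sum_add_distrib] at hS hSc
  rw [← sum_add_sum_compl S (‖v ·‖), ← sum_add_sum_compl S (‖r ·‖)]
  linarith

/-- Stechkin's estimate; the witness is the threshold set `{i | ∑ f < n * f i}`. -/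
lemma exists_card_le_mul_sum_compl_sq_le (f : ι → ℝ) (hf : ∀ i, 0 ≤ f i) (n : ℕ) :
    ∃ S : Finset ι, #S ≤ n ∧ n * ∑ i ∈ Sᶜ, f i ^ 2 ≤ (∑ i, f i) ^ 2 := by
  set T := ∑ i, f i
  have hT : 0 ≤ T := sum_nonneg fun i _ => hf i
  set S := ({i | T < n * f i} : Finset ι)
  refine ⟨S, ?_, ?_⟩
  · rcases S.eq_empty_or_nonempty with hS | hS
    · simp [hS]
    have h : #S * T < n * T :=
      calc #S * T = ∑ i ∈ S, T := by simp
        _ < ∑ i ∈ S, n * f i := sum_lt_sum_of_nonempty hS fun i hi => (mem_filter.1 hi).2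
        _ = n * ∑ i ∈ S, f i := (mul_sum ..).symm
        _ ≤ n * T := by gcongr; exact sum_le_univ_sum_of_nonneg hf
    exact_mod_cast (lt_of_mul_lt_mul_right h hT).le
  · calc n * ∑ i ∈ Sᶜ, f i ^ 2 = ∑ i ∈ Sᶜ, (n * f i) * f i := by
          rw [mul_sum]; exact sum_congr rfl fun i _ => by ring
      _ ≤ ∑ i ∈ Sᶜ, T * f i := sum_le_sum fun i hi =>
          mul_le_mul_of_nonneg_right (by simpa [S] using hi) (hf i)
      _ = T * ∑ i ∈ Sᶜ, f i := (mul_sum ..).symm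
      _ ≤ T * T := by gcongr; exact sum_le_univ_sum_of_nonneg hf
      _ = T ^ 2 := (sq T).symm

lemma bestApprox_nonneg (n : ℕ) (p : ℝ) (v : ι → ℂ) : 0 ≤ bestApprox n p v := by
  refine Real.sInf_nonneg ?_
  rintro _ ⟨z, -, rfl⟩
  unfold lpNorm
  positivity

lemma exists_card_le_sum_compl_norm_le_bestApprox (n : ℕ) (v : ι → ℂ) :
    ∃ S : Finset ι, #S ≤ n ∧ ∑ i ∈ Sᶜ, ‖v i‖ ≤ bestApprox n 1 v := by
  obtain ⟨S, hS, hmin⟩ := exists_min_image ({S | #S ≤ n} : Finset (Finset ι))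
    (fun S => ∑ i ∈ Sᶜ, ‖v i‖) ⟨∅, by simp⟩
  refine ⟨S, (mem_filter.1 hS).2, le_csInf ⟨lpNorm 1 v, 0, by simp [sparsity], by simp⟩ ?_⟩
  rintro _ ⟨z, hz, rfl⟩
  set T := ({i | z i ≠ 0} : Finset ι)
  calc ∑ i ∈ Sᶜ, ‖v i‖ ≤ ∑ i ∈ Tᶜ, ‖v i‖ := hmin T (by simpa [T, sparsity] using hz)
    _ = ∑ i ∈ Tᶜ, ‖(v - z) i‖ := sum_congr rfl fun i hi => by simp_all [T]
    _ ≤ ∑ i, ‖(v - z) i‖ := sum_le_univ_sum_of_nonneg fun i => norm_nonneg _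
    _ = lpNorm 1 (v - z) := (lpNorm_one_eq_sum _).symm

end Norms

namespace HasNSP

variable {ι : Type*} [Fintype ι] {m : ℕ} {A : Matrix (Fin m) ι ℂ} {n : ℕ} {ρ τ : ℝ}

lemma sqrt_sum_sq_le (hA : HasNSP A n ρ τ) (u : ι → ℂ) {S : Finset ι} (hS : #S ≤ n) :
    √(∑ i ∈ S, ‖u i‖ ^ 2) ≤ ρ / √n * ∑ i ∈ Sᶜ, ‖u i‖ + τ * lpNorm 2 (A *ᵥ u) := by
  have h := hA u S hS
  rwa [lpNorm_two_ite_mem, lpNorm_one_ite_mem_zero, neg_div, Real.rpow_neg (Nat.cast_nonneg n),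
    ← Real.sqrt_eq_rpow, ← div_eq_mul_inv] at h

lemma sum_norm_le (hA : HasNSP A n ρ τ) (hn : 0 < n) (u : ι → ℂ) {S : Finset ι}
    (hS : #S ≤ n) :
    ∑ i ∈ S, ‖u i‖ ≤ ρ * ∑ i ∈ Sᶜ, ‖u i‖ + τ * √n * lpNorm 2 (A *ᵥ u) := by
  have hsqrt : 0 < √(n : ℝ) := Real.sqrt_pos.2 (Nat.cast_pos.2 hn)
  have cauchySchwarz : ∑ i ∈ S, ‖u i‖ ≤ √n * √(∑ i ∈ S, ‖u i‖ ^ 2) := by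
    rw [← Real.sqrt_mul (Nat.cast_nonneg n)]
    refine Real.le_sqrt_of_sq_le ((sq_sum_le_card_mul_sum_sq ..).trans ?_)
    gcongr
  calc ∑ i ∈ S, ‖u i‖ ≤ √n * (ρ / √n * ∑ i ∈ Sᶜ, ‖u i‖ + τ * lpNorm 2 (A *ᵥ u)) :=
        cauchySchwarz.trans (by gcongr; exact hA.sqrt_sum_sq_le u hS)
    _ = ρ * ∑ i ∈ Sᶜ, ‖u i‖ + τ * √n * lpNorm 2 (A *ᵥ u) := by
        field_simp

variable {y : Fin m → ℂ} {v r : ι → ℂ} {lam : ℝ}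

theorem lpNorm_one_sub_le (hA : HasNSP A n ρ τ) (hn : 0 < n) (hρ₀ : 0 ≤ ρ) (hρ₁ : ρ < 1)
    (hτ : 0 ≤ τ) (hlam : 2 * τ * √n ≤ (1 + ρ) * lam)
    (hrv : lpNorm 1 r + lam * lpNorm 2 (y - A *ᵥ r) ≤ lpNorm 1 v + lam * lpNorm 2 (y - A *ᵥ v)) :
    lpNorm 1 (v - r) ≤
      2 * (1 + ρ) / (1 - ρ) * (bestApprox n 1 v + lam * lpNorm 2 (y - A *ᵥ v)) := by
  obtain ⟨S, hS, hσ⟩ := exists_card_le_sum_compl_norm_le_bestApprox n v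
  set E := lpNorm 2 (y - A *ᵥ v)
  set F := lpNorm 2 (y - A *ᵥ r)
  have hE : 0 ≤ E := lpNorm_two_nonneg _
  have hF : 0 ≤ F := lpNorm_two_nonneg _
  have hG : lpNorm 2 (A *ᵥ (v - r)) ≤ E + F := lpNorm_two_mulVec_sub_le A y v r
  have hcone := sum_compl_norm_sub_add_sum_norm_le S v r
  have hnsp := hA.sum_norm_le hn (v - r) hS
  rw [lpNorm_one_eq_sum, lpNorm_one_eq_sum] at hrv
  have h1ρ : 0 ≤ 1 + ρ := by linarith
  rw [lpNorm_one_eq_sum, ← sum_add_sum_compl S, div_mul_eq_mul_div, le_div_iff₀ (by linarith)]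
  linarith [mul_le_mul_of_nonneg_left hG (by positivity : 0 ≤ τ * √n),
    mul_le_mul_of_nonneg_right hlam hE, mul_le_mul_of_nonneg_right hlam hF,
    mul_le_mul_of_nonneg_left hcone h1ρ, mul_le_mul_of_nonneg_left hrv h1ρ,
    mul_le_mul_of_nonneg_left hσ h1ρ]

theorem sqrt_mul_lpNorm_two_sub_le (hA : HasNSP A n ρ τ) (hn : 0 < n) (hρ : 0 ≤ ρ)
    (hτ : 0 ≤ τ) (hlam : τ * √n ≤ lam)
    (hrv : lpNorm 1 r + lam * lpNorm 2 (y - A *ᵥ r) ≤ lpNorm 1 v + lam * lpNorm 2 (y - A *ᵥ v)) :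
    √n * lpNorm 2 (v - r) ≤ (2 + ρ) * lpNorm 1 (v - r) + 2 * lam * lpNorm 2 (y - A *ᵥ v) := by
  set E := lpNorm 2 (y - A *ᵥ v)
  set F := lpNorm 2 (y - A *ᵥ r)
  set W := ∑ i, ‖(v - r) i‖
  have hsqrt : 0 < √(n : ℝ) := Real.sqrt_pos.2 (Nat.cast_pos.2 hn)
  have hE : 0 ≤ E := lpNorm_two_nonneg _
  have hF : 0 ≤ F := lpNorm_two_nonneg _
  have hG : lpNorm 2 (A *ᵥ (v - r)) ≤ E + F := lpNorm_two_mulVec_sub_le A y v r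
  have hlamF : lam * F ≤ W + lam * E := by
    have : ∑ i, ‖v i‖ ≤ ∑ i, ‖r i‖ + W := by
      rw [← sum_add_distrib]
      exact sum_le_sum fun i _ => norm_le_norm_add_norm_sub' (v i) (r i)
    rw [lpNorm_one_eq_sum, lpNorm_one_eq_sum] at hrv
    linarith
  obtain ⟨S, hS, hstechkin⟩ :=
    exists_card_le_mul_sum_compl_sq_le (‖(v - r) ·‖) (fun _ => norm_nonneg _) n
  have htail : √n * √(∑ i ∈ Sᶜ, ‖(v - r) i‖ ^ 2) ≤ W := by
    rw [← Real.sqrt_mul (Nat.cast_nonneg n)]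
    exact Real.sqrt_le_iff.2 ⟨by positivity, hstechkin⟩
  have hhead : √n * √(∑ i ∈ S, ‖(v - r) i‖ ^ 2) ≤ ρ * W + τ * √n * (E + F) := by
    have hW : ∑ i ∈ Sᶜ, ‖(v - r) i‖ ≤ W := sum_le_univ_sum_of_nonneg fun _ => norm_nonneg _
    calc √n * √(∑ i ∈ S, ‖(v - r) i‖ ^ 2)
        ≤ √n * (ρ / √n * ∑ i ∈ Sᶜ, ‖(v - r) i‖ + τ * lpNorm 2 (A *ᵥ (v - r))) := by
          gcongr; exact hA.sqrt_sum_sq_le (v - r) hS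
      _ = ρ * ∑ i ∈ Sᶜ, ‖(v - r) i‖ + τ * √n * lpNorm 2 (A *ᵥ (v - r)) := by field_simp
      _ ≤ ρ * W + τ * √n * (E + F) := by gcongr
  have hsplit := mul_le_mul_of_nonneg_left (lpNorm_two_le_add_compl S (v - r)) hsqrt.le
  rw [lpNorm_one_eq_sum]
  linarith [mul_le_mul_of_nonneg_right hlam hE, mul_le_mul_of_nonneg_right hlam hF]

end HasNSP

/-- **Recovery guarantees for Square Root Lasso under the NSP**
(Petersen–Jung / Adcock–Brugiapaglia–Webster).  If `A` satisfies the `ℓ₂`-robust NSP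
of order `n` with constants `ρ ∈ (0,1)` and `τ > 0`, and `λ ≥ ((3+ρ)/(1+ρ))·τ·√n`,
then there is a constant `C > 0` depending only on `ρ` and `τ` such that every
minimizer `r` of `z ↦ ‖z‖₁ + λ‖y − Az‖₂` satisfies, for `p ∈ {1,2}` and all `v`,
`‖v − r‖_p ≤ C ( n^{1/p−1} σ_n(v)₁ + (λ n^{1/p−1} + n^{1−p/2}) ‖y − Av‖₂ )`. -/
theorem stmt1 (ρ τ : ℝ) (hρ : ρ ∈ Set.Ioo (0 : ℝ) 1) (hτ : 0 < τ) :
    ∃ C > 0, ∀ (m N n : ℕ), 0 < n → ∀ A : Matrix (Fin m) (Fin N) ℂ,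
      HasNSP A n ρ τ → ∀ lam : ℝ, lam ≥ ((3 + ρ) / (1 + ρ)) * τ * Real.sqrt n →
      ∀ (y : Fin m → ℂ) (r : Fin N → ℂ),
        (∀ z : Fin N → ℂ,
          lpNorm 1 r + lam * lpNorm 2 (y - A.mulVec r) ≤
            lpNorm 1 z + lam * lpNorm 2 (y - A.mulVec z)) →
        ∀ p ∈ ({1, 2} : Set ℝ), ∀ v : Fin N → ℂ,
          lpNorm p (v - r) ≤
            C * ((n : ℝ) ^ (1 / p - 1) * bestApprox n 1 v +
              (lam * (n : ℝ) ^ (1 / p - 1) + (n : ℝ) ^ (1 - p / 2)) *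
                lpNorm 2 (y - A.mulVec v)) := by
  obtain ⟨hρ₀, hρ₁⟩ := hρ
  set K := 2 * (1 + ρ) / (1 - ρ)
  have hK : 0 ≤ K := div_nonneg (by linarith) (by linarith)
  refine ⟨(2 + ρ) * K + 2, by positivity, ?_⟩
  intro m N n hn A hA lam hlam y r hr p hp v
  have hsqrt : 0 < √(n : ℝ) := Real.sqrt_pos.2 (Nat.cast_pos.2 hn)
  -- `(3 + ρ) / (1 + ρ) = 1 + 2 / (1 + ρ)` dominates both `1` and `2 / (1 + ρ)`.
  rw [ge_iff_le, div_mul_eq_mul_div, div_mul_eq_mul_div, div_le_iff₀ (by linarith)] at hlam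
  have hlam₁ : τ * √n ≤ lam := by nlinarith [mul_pos hτ hsqrt]
  have hlam₂ : 2 * τ * √n ≤ (1 + ρ) * lam := by nlinarith [mul_pos hτ hsqrt]
  have hσ := bestApprox_nonneg n 1 v
  set E := lpNorm 2 (y - A *ᵥ v)
  have hE : 0 ≤ E := lpNorm_two_nonneg _
  have hℓ1 := hA.lpNorm_one_sub_le hn hρ₀.le hρ₁ hτ.le hlam₂ (hr v)
  rcases hp with rfl | rfl
  · norm_num [← Real.sqrt_eq_rpow]
    have hσE : 0 ≤ bestApprox n 1 v + lam * E :=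
      add_nonneg hσ (mul_nonneg ((mul_nonneg hτ.le hsqrt.le).trans hlam₁) hE)
    linarith [mul_nonneg (by positivity : 0 ≤ (1 + ρ) * K + 2) hσE,
      mul_nonneg (by positivity : 0 ≤ (2 + ρ) * K + 2) (mul_nonneg hsqrt.le hE)]
  · have hℓ2 := hA.sqrt_mul_lpNorm_two_sub_le hn hρ₀.le hτ.le hlam₁ (hr v)
    norm_num [Real.rpow_neg (Nat.cast_nonneg n), ← Real.sqrt_eq_rpow]
    have key : √n * lpNorm 2 (v - r) ≤ ((2 + ρ) * K + 2) * (bestApprox n 1 v + lam * E) := by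
      linarith [mul_le_mul_of_nonneg_left hℓ1 (by linarith : 0 ≤ 2 + ρ)]
    calc lpNorm 2 (v - r) = √n * lpNorm 2 (v - r) / √n := by field_simp
      _ ≤ ((2 + ρ) * K + 2) * (bestApprox n 1 v + lam * E) / √n := by gcongr
      _ ≤ _ := by
        rw [div_eq_mul_inv]
        linarith [mul_nonneg (by positivity : 0 ≤ (2 + ρ) * K + 2) hE]
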